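/- Let β, x₁,…,x_d, b₁, b₂,… be independent indeterminates and work in the ring of formal power series over ℤ in these variables. Let a = (a₁,…,a_d) ∈ ℤ^d with a_i + d - i ≥ 0 for every i. Define the d×d matrices H := ( Σ_{s≥0} C(i-d, s) β^s G^{(a_i+d-i)}_{a_i+j-i+s} )_{1≤i,j≤d} and M := ( (-1)^{d-i} e_{d-i}^{(j)}(x) )_{1≤i,j≤d}, where e_p^{(j)}(x) is the p-th elementary symmetric polynomial in x₁,…,x_d with x_j omitted, and C(n,s) is the generalized binomial coefficient given by (1+x)^n = Σ_{s≥0} C(n,s)x^s. Then the (i,j)-entry of the product HM equals [x_j|b]^{a_i+d-i} · (1+βx_j)^{i-d-1} · ∏_{t=1}^{d} (1+βx_t). -/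

import Mathlib

/-!
Multiplying `F^{(k)}(u)` by `∏_{t ≠ j} (1 - xₜ u)`, whose coefficients form column `j` of `M`,
cancels all geometric factors but `(1 - x_j u)⁻¹`; as `∏_ℓ (1 + (u + β) b_ℓ)` has degree `k`,
the coefficient of `u^{k+t}` of the product is `x_jᵗ [x_j|b]^k ∏ₜ (1 + βxₜ)`. Pairing the
`G`'s with column `j` thus turns the defining series of `G` into the geometric series
`∑ᵣ (-βx_j)ʳ = (1 + βx_j)⁻¹`, and the weights `C(i-d, s) βˢ` of `H` into the binomial series
`∑ₛ C(i-d, s) (βx_j)ˢ = (1 + βx_j)^{i-d}`. All these series converge `β`-adically, which is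
what makes the finite sum over `p` commute with them.
-/

open scoped BigOperators

namespace GrothDet

/-- Index type for the indeterminates: `β`, `x₁,…,x_d`, `b₁,b₂,…`. -/
abbrev Idx (d : ℕ) := Unit ⊕ Fin d ⊕ ℕ

/-- The ambient ring: formal power series over `ℤ` in `β`, the `xᵢ` and the `bⱼ`. -/
abbrev R (d : ℕ) := MvPowerSeries (Idx d) ℤ

noncomputable def β (d : ℕ) : R d := MvPowerSeries.X (Sum.inl ())
noncomputable def x (d : ℕ) (i : Fin d) : R d := MvPowerSeries.X (Sum.inr (Sum.inl i))
noncomputable def b (d : ℕ) (ℓ : ℕ) : R d := MvPowerSeries.X (Sum.inr (Sum.inr ℓ))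

/-- `x ⊕ y := x + y + βxy`. -/
noncomputable def oplus (d : ℕ) (u v : R d) : R d := u + v + β d * u * v

/-- `[y|b]^k := (y ⊕ b₁)⋯(y ⊕ b_k)`. -/
noncomputable def fb (d : ℕ) (y : R d) (k : ℕ) : R d :=
  ∏ ℓ ∈ Finset.range k, oplus d y (b d ℓ)

/-- The multiplicative inverse of `1 + β * x j` (a unit since its constant term is `1`). -/
noncomputable def invOneAdd (d : ℕ) (j : Fin d) : R d :=
  MvPowerSeries.invOfUnit (1 + β d * x d j) 1

/-- `F^{(k)}(u) = ∏ᵢ (1+βxᵢ)/(1-xᵢu) · ∏_{ℓ=1}^k (1+(u+β)b_ℓ)` as a power series in `u`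
over `R d`; here `(1-xᵢu)⁻¹ = ∑_n xᵢⁿ uⁿ`. -/
noncomputable def F (d : ℕ) (k : ℕ) : PowerSeries (R d) :=
  (∏ i : Fin d,
      PowerSeries.C (1 + β d * x d i) * PowerSeries.mk fun n => x d i ^ n) *
    ∏ ℓ ∈ Finset.range k,
      (1 + (PowerSeries.X + PowerSeries.C (β d)) * PowerSeries.C (b d ℓ))

/-- `[u^t] F^{(k)}(u)`, extended by `0` in negative degrees `t`. -/
noncomputable def Fcoeff (d : ℕ) (k : ℕ) (t : ℤ) : R d :=
  if 0 ≤ t then PowerSeries.coeff t.toNat (F d k) else 0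

/-- The sum `∑_{s≥0} f s` of a family of power series such that `β^s ∣ f s`:
it is defined coefficientwise; on the coefficient of a monomial `n` only the
(finitely many) terms with `s ≤ n(β)` contribute, and the value is the limit of the
partial sums in the formal power series topology. -/
noncomputable def seriesSum (d : ℕ) (f : ℕ → R d) : R d :=
  (fun n => ∑ s ∈ Finset.range (n (Sum.inl ()) + 1), MvPowerSeries.coeff n (f s) :
    (Idx d →₀ ℕ) → ℤ)

/-- `G^{(k)}_m = ∑_{s≥0} (-β)^s [u^{m+s}] F^{(k)}(u)`. -/
noncomputable def G (d : ℕ) (k : ℕ) (m : ℤ) : R d :=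
  seriesSum d fun s => (-β d) ^ s * Fcoeff d k (m + s)

/-- The `p`-th elementary symmetric function of the family `f` restricted to `S`. -/
noncomputable def esym (d : ℕ) (S : Finset (Fin d)) (p : ℕ) (f : Fin d → R d) : R d :=
  ∑ t ∈ S.powersetCard p, ∏ i ∈ t, f i

/-- `x_i/(1+βx_i) = -x̄_i`. -/
noncomputable def xbar (d : ℕ) (i : Fin d) : R d := x d i * invOneAdd d i



section BetaAdic

variable {d : ℕ}

lemma coeff_seriesSum (f : ℕ → R d) (n : Idx d →₀ ℕ) :
    MvPowerSeries.coeff n (seriesSum d f)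
      = ∑ s ∈ Finset.range (n (Sum.inl ()) + 1), MvPowerSeries.coeff n (f s) := rfl

lemma beta_pow_dvd_iff {N : ℕ} {z : R d} :
    β d ^ N ∣ z ↔ ∀ n : Idx d →₀ ℕ, n (Sum.inl ()) < N → MvPowerSeries.coeff n z = 0 :=
  MvPowerSeries.X_pow_dvd_iff

lemma eq_of_forall_beta_pow_dvd_sub {y z : R d} (h : ∀ N, β d ^ N ∣ y - z) : y = z := by
  ext n
  rw [← sub_eq_zero, ← map_sub]
  exact beta_pow_dvd_iff.mp (h (n (Sum.inl ()) + 1)) n (Nat.lt_succ_self _)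

lemma beta_pow_dvd_seriesSum_sub_sum {f : ℕ → R d} (hf : ∀ s, β d ^ s ∣ f s) (N : ℕ) :
    β d ^ N ∣ seriesSum d f - ∑ s ∈ Finset.range N, f s := by
  refine beta_pow_dvd_iff.mpr fun n hn => ?_
  rw [map_sub, map_sum, coeff_seriesSum, sub_eq_zero]
  refine Finset.sum_subset (Finset.range_subset_range.2 hn) fun s _ hs => ?_
  exact beta_pow_dvd_iff.mp (hf s) n (by simpa using hs)

lemma seriesSum_eq_of_beta_pow_dvd {f : ℕ → R d} {y : R d} (hf : ∀ s, β d ^ s ∣ f s)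
    (hy : ∀ N, β d ^ N ∣ y - ∑ s ∈ Finset.range N, f s) : seriesSum d f = y :=
  eq_of_forall_beta_pow_dvd_sub fun N => by
    simpa using dvd_sub (beta_pow_dvd_seriesSum_sub_sum hf N) (hy N)

lemma seriesSum_mul {f : ℕ → R d} (hf : ∀ s, β d ^ s ∣ f s) (c : R d) :
    seriesSum d f * c = seriesSum d (fun s => f s * c) := by
  refine (seriesSum_eq_of_beta_pow_dvd (fun s => (hf s).mul_right c) fun N => ?_).symm
  rw [← Finset.sum_mul, ← sub_mul]
  exact (beta_pow_dvd_seriesSum_sub_sum hf N).mul_right c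

lemma sum_seriesSum {ι : Type*} (P : Finset ι) {f : ι → ℕ → R d}
    (hf : ∀ p s, β d ^ s ∣ f p s) :
    ∑ p ∈ P, seriesSum d (f p) = seriesSum d (fun s => ∑ p ∈ P, f p s) := by
  refine (seriesSum_eq_of_beta_pow_dvd (fun s => Finset.dvd_sum fun p _ => hf p s)
    fun N => ?_).symm
  rw [Finset.sum_comm, ← Finset.sum_sub_distrib]
  exact Finset.dvd_sum fun p _ => beta_pow_dvd_seriesSum_sub_sum (hf p) N

lemma sum_seriesSum_mul {ι : Type*} (P : Finset ι) {w : ℕ → R d} (hw : ∀ s, β d ^ s ∣ w s)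
    (g : ι → ℕ → R d) (c : ι → R d) :
    ∑ p ∈ P, seriesSum d (fun s => w s * g p s) * c p
      = seriesSum d (fun s => w s * ∑ p ∈ P, g p s * c p) := by
  have hwg : ∀ p s, β d ^ s ∣ w s * g p s := fun p s => (hw s).mul_right _
  simp_rw [seriesSum_mul (hwg _), Finset.mul_sum, ← mul_assoc]
  exact sum_seriesSum P fun p s => (hwg p s).mul_right _

lemma seriesSum_ite_zero (c : R d) : seriesSum d (fun s => if s = 0 then c else 0) = c := by
  refine seriesSum_eq_of_beta_pow_dvd (fun s => ?_) fun N => ?_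
  · rcases s with _ | s <;> simp
  · rcases N with _ | N
    · simp
    · simp [Finset.sum_ite_eq']

lemma seriesSum_eq_mul_one_add {f g : ℕ → R d} {w : R d} (hf : ∀ s, β d ^ s ∣ f s)
    (hw : β d ∣ w) (h0 : g 0 = f 0) (hg : ∀ s, g (s + 1) = f (s + 1) + f s * w) :
    seriesSum d g = seriesSum d f * (1 + w) := by
  have hfw : ∀ s, β d ^ (s + 1) ∣ f s * w := fun s => pow_succ (β d) s ▸ mul_dvd_mul (hf s) hw
  refine seriesSum_eq_of_beta_pow_dvd (fun s => ?_) fun N => ?_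
  · rcases s with _ | s
    · simp
    · exact hg s ▸ dvd_add (hf _) (hfw s)
  rcases N with _ | N
  · simp
  have hpartial : ∑ s ∈ Finset.range (N + 1), g s
      = ∑ s ∈ Finset.range (N + 1), f s + (∑ s ∈ Finset.range N, f s) * w := by
    rw [Finset.sum_range_succ' g, Finset.sum_range_succ' f]
    simp only [hg, h0, Finset.sum_add_distrib, Finset.sum_mul]
    ring
  have hsplit : seriesSum d f * (1 + w) - ∑ s ∈ Finset.range (N + 1), g s
      = (seriesSum d f - ∑ s ∈ Finset.range (N + 1), f s)
        + (seriesSum d f - ∑ s ∈ Finset.range N, f s) * w := by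
    rw [hpartial]; ring
  rw [hsplit, pow_succ]
  exact dvd_add (beta_pow_dvd_seriesSum_sub_sum hf _)
    (mul_dvd_mul (beta_pow_dvd_seriesSum_sub_sum hf N) hw)

lemma beta_pow_dvd_zsmul_pow {w : R d} (hw : β d ∣ w) (c : ℤ) (s : ℕ) : β d ^ s ∣ c • w ^ s :=
  by rw [zsmul_eq_mul]; exact (pow_dvd_pow_of_dvd hw s).mul_left _

lemma seriesSum_choose_neg_smul_pow {w y : R d} (hw : β d ∣ w) (hy : y * (1 + w) = 1)
    (n : ℕ) : seriesSum d (fun s => Ring.choose (-(n : ℤ)) s • w ^ s) = y ^ n := by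
  induction n with
  | zero =>
    refine (congrArg (seriesSum d) (funext fun s => ?_)).trans (seriesSum_ite_zero 1)
    rcases s with _ | s <;> simp
  | succ n ih =>
    have hpascal := seriesSum_eq_mul_one_add
      (fun s => beta_pow_dvd_zsmul_pow hw (Ring.choose (-(n + 1 : ℤ)) s) s)
      hw (g := fun s => Ring.choose (-(n : ℤ)) s • w ^ s) (by simp)
      fun s => by
        rw [show -(n : ℤ) = -(n + 1 : ℤ) + 1 by ring, Ring.choose_succ_succ, add_smul,
          pow_succ, ← smul_mul_assoc, add_comm]
    rw [ih] at hpascal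
    push_cast
    calc _ = seriesSum d (fun s => Ring.choose (-(n + 1 : ℤ)) s • w ^ s) * (1 + w) * y := by
          rw [mul_assoc, mul_comm (1 + w), hy, mul_one]
      _ = y ^ (n + 1) := by rw [← hpascal, pow_succ]

lemma seriesSum_neg_pow {w y : R d} (hw : β d ∣ w) (hy : y * (1 + w) = 1) :
    seriesSum d (fun s => (-w) ^ s) = y := by
  have hchoose : ∀ s : ℕ, Ring.choose (-1 : ℤ) s = (-1) ^ s := fun s => by
    rw [Ring.choose_neg, add_sub_cancel_left, Ring.choose_natCast, Nat.choose_self,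
      Nat.cast_one, Units.smul_def, smul_eq_mul, mul_one, Int.coe_negOnePow_natCast]
  simpa [hchoose, neg_pow w] using seriesSum_choose_neg_smul_pow hw hy 1

end BetaAdic

section PowerSeriesCoeff

open PowerSeries

variable {A : Type*} [CommRing A]

lemma mk_pow_mul_one_sub_C_mul_X (y : A) : mk (y ^ ·) * (1 - C y * X) = 1 := by
  simpa [rescale_mk, rescale_X] using congrArg (rescale y) (mk_one_mul_one_sub_eq_one A)

lemma coeff_succ_mk_pow_mul (y : A) (Q : A⟦X⟧) (n : ℕ) :
    coeff (n + 1) (mk (y ^ ·) * Q) = y * coeff n (mk (y ^ ·) * Q) + coeff (n + 1) Q := by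
  have hQ : mk (y ^ ·) * Q - C y * (mk (y ^ ·) * Q * X) = Q := by
    linear_combination Q * mk_pow_mul_one_sub_C_mul_X y
  have h := congrArg (coeff (n + 1)) hQ
  rw [map_sub, coeff_C_mul, coeff_succ_mul_X] at h
  linear_combination h

lemma coeff_add_mk_pow_mul_of_coeff_eq_zero {P : A⟦X⟧} {k : ℕ}
    (hP : ∀ r, k < r → coeff r P = 0) (y : A) (t : ℕ) :
    coeff (k + t) (mk (y ^ ·) * P) = y ^ t * coeff k (mk (y ^ ·) * P) := by
  induction t with
  | zero => simp
  | succ t ih =>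
    rw [← add_assoc, coeff_succ_mk_pow_mul, ih, hP _ (by omega), pow_succ]
    ring

lemma mul_one_add_X_add_C_mul_C (P : A⟦X⟧) (c e : A) :
    P * (1 + (X + C c) * C e) = C (1 + c * e) * P + C e * (P * X) := by
  simp only [map_add, map_mul, map_one]
  ring

lemma coeff_prod_one_add_X_add_C_mul_C_eq_zero (c : A) (e : ℕ → A) (k : ℕ) :
    ∀ r, k < r → coeff r (∏ ℓ ∈ Finset.range k, (1 + (X + C c) * C (e ℓ))) = 0 := by
  induction k with
  | zero =>
    rintro (_ | r) hr
    · omega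
    · simp [coeff_one]
  | succ k ih =>
    rintro (_ | r) hr
    · omega
    rw [Finset.prod_range_succ, mul_one_add_X_add_C_mul_C, map_add, coeff_C_mul, coeff_C_mul, coeff_succ_mul_X,
      ih _ (by omega), ih _ (by omega), mul_zero, mul_zero, add_zero]

/-- The `k`-th coefficient of `(1 - yX)⁻¹ P` for `P` of degree `≤ k` is the reversal of `P`
evaluated at `y`; the reversal of `1 + (X + c) e` is `X + e + c X e`. -/
lemma coeff_mk_pow_mul_prod_one_add_X_add_C_mul_C (y c : A) (e : ℕ → A) (k : ℕ) :
    coeff k (mk (y ^ ·) * ∏ ℓ ∈ Finset.range k, (1 + (X + C c) * C (e ℓ)))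
      = ∏ ℓ ∈ Finset.range k, (y + e ℓ + c * y * e ℓ) := by
  induction k with
  | zero => simp
  | succ k ih =>
    rw [Finset.prod_range_succ, Finset.prod_range_succ, ← mul_assoc, mul_one_add_X_add_C_mul_C,
      map_add, coeff_C_mul,
      coeff_C_mul, coeff_succ_mul_X,
      coeff_add_mk_pow_mul_of_coeff_eq_zero (coeff_prod_one_add_X_add_C_mul_C_eq_zero c e k) y 1,
      ih]
    ring

lemma prod_one_sub_C_mul_X {ι : Type*} (S : Finset ι) (f : ι → A) :
    ∏ t ∈ S, (1 - C (f t) * X)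
      = ∑ q ∈ Finset.range (S.card + 1),
          C ((-1) ^ q * ∑ T ∈ S.powersetCard q, ∏ t ∈ T, f t) * X ^ q := by
  classical
  have hmonomial : ∀ T : Finset ι,
      ∏ t ∈ T, (-(C (f t) * X)) = C ((-1) ^ T.card * ∏ t ∈ T, f t) * X ^ T.card := fun T => by
    simp only [neg_eq_neg_one_mul (C (f _) * X), Finset.prod_mul_distrib, Finset.prod_const,
      map_mul, map_pow, map_neg, map_one, map_prod, mul_assoc]
  simp_rw [sub_eq_neg_add, Finset.prod_add, Finset.prod_const_one, mul_one, hmonomial,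
    Finset.sum_powerset]
  refine Finset.sum_congr rfl fun q _ => ?_
  rw [Finset.mul_sum, map_sum, Finset.sum_mul]
  refine Finset.sum_congr rfl fun T hT => ?_
  rw [(Finset.mem_powersetCard.1 hT).2]

end PowerSeriesCoeff

section Entry

open PowerSeries

variable {d : ℕ}

lemma invOneAdd_mul (j : Fin d) : invOneAdd d j * (1 + β d * x d j) = 1 := by
  rw [mul_comm]
  exact MvPowerSeries.mul_invOfUnit _ 1 (by simp [β, x])

noncomputable def prodOneSubXErase (d : ℕ) (j : Fin d) : PowerSeries (R d) :=
  ∏ t ∈ Finset.univ \ {j}, (1 - C (x d t) * X)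

lemma F_mul_prodOneSubXErase (k : ℕ) (j : Fin d) :
    F d k * prodOneSubXErase d j
      = C (∏ t : Fin d, (1 + β d * x d t)) * (mk (x d j ^ ·) *
          ∏ ℓ ∈ Finset.range k, (1 + (X + C (β d)) * C (b d ℓ))) := by
  have hgeom : (∏ t : Fin d, mk (x d t ^ ·)) * prodOneSubXErase d j = mk (x d j ^ ·) := by
    rw [prodOneSubXErase, ← Finset.mul_prod_erase _ _ (Finset.mem_univ j), ← Finset.erase_eq,
      mul_assoc, ← Finset.prod_mul_distrib]
    simp [mk_pow_mul_one_sub_C_mul_X]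
  rw [F, Finset.prod_mul_distrib, ← map_prod, ← hgeom]
  ring

lemma coeff_add_F_mul_prodOneSubXErase (k t : ℕ) (j : Fin d) :
    coeff (k + t) (F d k * prodOneSubXErase d j)
      = (∏ t : Fin d, (1 + β d * x d t)) * (x d j ^ t * fb d (x d j) k) := by
  rw [F_mul_prodOneSubXErase, coeff_C_mul, coeff_add_mk_pow_mul_of_coeff_eq_zero
    (coeff_prod_one_add_X_add_C_mul_C_eq_zero _ _ k), coeff_mk_pow_mul_prod_one_add_X_add_C_mul_C]
  rfl

lemma coeff_F_mul_X_pow (k q n : ℕ) : coeff n (F d k * X ^ q) = Fcoeff d k (n - q) := by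
  rw [coeff_mul_X_pow', Fcoeff]
  by_cases h : q ≤ n
  · rw [if_pos h, if_pos (by omega), show ((n : ℤ) - q).toNat = n - q by omega]
  · rw [if_neg h, if_neg (by omega)]

/-- Column `j` of `M` lists the coefficients of `∏_{t ≠ j} (1 - xₜ u)` in decreasing degree. -/
lemma sum_Fcoeff_mul_signed_esym (k : ℕ) (j : Fin d) {m : ℤ} {n : ℕ}
    (hmn : m + (d - 1 : ℕ) = n) :
    ∑ p : Fin d, Fcoeff d k (m + p) *
        ((-1 : R d) ^ (d - 1 - (p : ℕ)) * esym d (Finset.univ \ {j}) (d - 1 - (p : ℕ)) (x d))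
      = coeff n (F d k * prodOneSubXErase d j) := by
  have hcard : (Finset.univ \ {j}).card + 1 = d := by
    rw [Finset.card_sdiff_of_subset (by simp), Finset.card_univ, Fintype.card_fin,
      Finset.card_singleton]
    have := j.pos
    omega
  rw [prodOneSubXErase, prod_one_sub_C_mul_X, hcard, Finset.mul_sum, map_sum,
    ← Finset.sum_range_reflect, ← Fin.sum_univ_eq_sum_range]
  refine Finset.sum_congr rfl fun p _ => ?_
  rw [mul_left_comm (F d k), coeff_C_mul, coeff_F_mul_X_pow, mul_comm]
  have hp := p.isLt
  congr 2
  omega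

lemma sum_G_mul_signed_esym (k t : ℕ) (j : Fin d) {m : ℤ} (hm : m + (d - 1 : ℕ) = (k + t : ℕ)) :
    ∑ p : Fin d, G d k (m + p) *
        ((-1 : R d) ^ (d - 1 - (p : ℕ)) * esym d (Finset.univ \ {j}) (d - 1 - (p : ℕ)) (x d))
      = x d j ^ t * (invOneAdd d j * ((∏ t : Fin d, (1 + β d * x d t)) * fb d (x d j) k)) := by
  have hrow : ∀ r : ℕ, ∑ p : Fin d, Fcoeff d k (m + p + r) *
        ((-1 : R d) ^ (d - 1 - (p : ℕ)) * esym d (Finset.univ \ {j}) (d - 1 - (p : ℕ)) (x d))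
      = (∏ t : Fin d, (1 + β d * x d t)) * (x d j ^ (t + r) * fb d (x d j) k) := fun r => by
    rw [← coeff_add_F_mul_prodOneSubXErase, ← add_assoc,
      ← sum_Fcoeff_mul_signed_esym k j (m := m + r) (by push_cast at hm ⊢; omega)]
    simp only [add_right_comm m]
  simp only [G]
  rw [sum_seriesSum_mul _ (fun r => ⟨(-1) ^ r, by ring⟩), ← seriesSum_neg_pow
    (dvd_mul_right (β d) (x d j)) (invOneAdd_mul j), mul_left_comm,
    seriesSum_mul (fun r => ⟨(-x d j) ^ r, by ring⟩)]
  simp only [hrow]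
  congr 1
  funext r
  ring

end Entry

/-- The `(i,j)`-entry of `H·M` equals `[x_j|b]^{a_i+d-i} (1+βx_j)^{i-d-1} ∏_t (1+βx_t)`. -/
theorem grothendieck_HM_entry
    (d : ℕ) (a : Fin d → ℤ) (ha : ∀ i : Fin d, 0 ≤ a i + d - ((i : ℕ) + 1)) (i j : Fin d) :
    (Matrix.of (fun i j : Fin d =>
        seriesSum d fun s =>
          Ring.choose (((i : ℕ) : ℤ) + 1 - d) s •
            (β d ^ s * G d (a i + d - ((i : ℕ) + 1)).toNat (a i + (j : ℕ) - (i : ℕ) + s))) *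
      Matrix.of (fun i j : Fin d =>
        (-1 : R d) ^ (d - 1 - (i : ℕ)) *
          esym d (Finset.univ \ {j}) (d - 1 - (i : ℕ)) (x d))) i j
      = fb d (x d j) (a i + d - ((i : ℕ) + 1)).toNat * invOneAdd d j ^ (d - (i : ℕ)) *
          ∏ t : Fin d, (1 + β d * x d t) := by
  rw [Matrix.mul_apply]
  simp only [Matrix.of_apply, ← smul_mul_assoc]
  set k := (a i + d - ((i : ℕ) + 1)).toNat
  have hk : (k : ℤ) = a i + d - ((i : ℕ) + 1) := Int.toNat_of_nonneg (ha i)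
  have hi := i.isLt
  have hrow : ∀ s : ℕ, ∑ p : Fin d, G d k (a i + p - i + s) *
        ((-1 : R d) ^ (d - 1 - (p : ℕ)) * esym d (Finset.univ \ {j}) (d - 1 - (p : ℕ)) (x d))
      = x d j ^ s * (invOneAdd d j * ((∏ t : Fin d, (1 + β d * x d t)) * fb d (x d j) k)) :=
    fun s => by
      rw [← sum_G_mul_signed_esym k s j (m := a i - i + s) (by push_cast; omega)]
      simp only [add_right_comm _ _ (s : ℤ), sub_add_eq_add_sub]
  have hexp : ((i : ℕ) : ℤ) + 1 - d = -((d - 1 - i : ℕ) : ℤ) := by omega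
  rw [sum_seriesSum_mul _ (fun s => beta_pow_dvd_zsmul_pow dvd_rfl _ s)]
  simp only [hrow, hexp]
  simp only [smul_mul_assoc, ← mul_assoc, ← mul_pow]
  simp only [← smul_mul_assoc, mul_assoc]
  rw [← seriesSum_mul (fun s => beta_pow_dvd_zsmul_pow (dvd_mul_right _ _) _ s),
    seriesSum_choose_neg_smul_pow (dvd_mul_right _ _) (invOneAdd_mul j),
    show d - (i : ℕ) = (d - 1 - i) + 1 by omega, pow_succ]
  ring

end GrothDet
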